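/- arXiv:2209.14572 — 8 statements merged into one kernel-verified Lean document; each statement's English description precedes it below -/
import Mathlib

section
/- Let (u,p) be a Gavrilov flow on an open set U ⊆ ℝⁿ, let φ : ℝ → ℝ be a smooth function, and let Φ : ℝ → ℝ be a smooth function with Φ' = φ². Then the pair (ũ, p̃) defined by ũ(x) = φ(p(x))·u(x) and p̃(x) = Φ(p(x)) is again a Gavrilov flow on U; in particular ∇p̃(x) = φ(p(x))²·∇p(x) for all x ∈ U. -/
/-! Since `u · ∇p = 0`, the factor `φ(p)` is constant along the flow of `u`, so it passes
through transport by `u`: `(φ(p)u · ∇)(φ(p)u) = φ(p)² (u · ∇)u` and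
`div (φ(p)u) = φ(p) div u`. Multiplying the momentum equation by `φ(p)²` gives the new one
with pressure `Φ(p)`, because `∇Φ(p) = φ(p)² ∇p`. -/

open Finset

/-- A pair `(u, p)` of smooth functions on an open set `U ⊆ ℝⁿ` is a *Gavrilov flow*
if it satisfies the steady Euler equations (momentum and incompressibility) together with
the orthogonality condition `u · grad p = 0` at every point of `U`. -/
def IsGavrilovFlow {n : ℕ} (U : Set (Fin n → ℝ)) (u : (Fin n → ℝ) → Fin n → ℝ)
    (p : (Fin n → ℝ) → ℝ) : Prop :=
  IsOpen U ∧ ContDiffOn ℝ (⊤ : ℕ∞) u U ∧ ContDiffOn ℝ (⊤ : ℕ∞) p U ∧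
  (∀ x ∈ U, ∀ i, (∑ j, u x j * fderiv ℝ u x (Pi.single j 1) i)
      + fderiv ℝ p x (Pi.single i 1) = 0) ∧
  (∀ x ∈ U, ∑ i, fderiv ℝ u x (Pi.single i 1) i = 0) ∧
  (∀ x ∈ U, ∑ i, u x i * fderiv ℝ p x (Pi.single i 1) = 0)

section Calculus

variable {E F : Type*} [NormedAddCommGroup E] [NormedSpace ℝ E]
  [NormedAddCommGroup F] [NormedSpace ℝ F]

theorem fderiv_comp_apply_of_hasDerivAt {Φ : ℝ → ℝ} {p : E → ℝ} {x : E} {c : ℝ}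
    (hΦ : HasDerivAt Φ c (p x)) (hp : DifferentiableAt ℝ p x) (v : E) :
    fderiv ℝ (fun y => Φ (p y)) x v = c * fderiv ℝ p x v := by
  have hΦp : HasFDerivAt (fun y => Φ (p y)) (c • fderiv ℝ p x) x :=
    hΦ.comp_hasFDerivAt x hp.hasFDerivAt
  rw [hΦp.fderiv]
  rfl

theorem fderiv_comp_smul_apply {φ : ℝ → ℝ} {p : E → ℝ} {u : E → F} {x : E}
    (hφ : DifferentiableAt ℝ φ (p x)) (hp : DifferentiableAt ℝ p x)
    (hu : DifferentiableAt ℝ u x) (v : E) :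
    fderiv ℝ (fun y => φ (p y) • u y) x v
      = φ (p x) • fderiv ℝ u x v + (deriv φ (p x) * fderiv ℝ p x v) • u x := by
  have hφp : HasFDerivAt (fun y => φ (p y)) (deriv φ (p x) • fderiv ℝ p x) x :=
    hφ.hasDerivAt.comp_hasFDerivAt x hp.hasFDerivAt
  rw [(hφp.fun_smul hu.hasFDerivAt).fderiv]
  rfl

end Calculus

namespace IsGavrilovFlow

variable {n : ℕ} {U : Set (Fin n → ℝ)} {u : (Fin n → ℝ) → Fin n → ℝ} {p : (Fin n → ℝ) → ℝ}
  {φ Φ : ℝ → ℝ} {x : Fin n → ℝ}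

theorem differentiableAt_velocity (hG : IsGavrilovFlow U u p) (hx : x ∈ U) :
    DifferentiableAt ℝ u x :=
  (hG.2.1.contDiffAt (hG.1.mem_nhds hx)).differentiableAt (by simp)

theorem differentiableAt_pressure (hG : IsGavrilovFlow U u p) (hx : x ∈ U) :
    DifferentiableAt ℝ p x :=
  (hG.2.2.1.contDiffAt (hG.1.mem_nhds hx)).differentiableAt (by simp)

theorem fderiv_rescaledPressure (hG : IsGavrilovFlow U u p) (hΦ : Differentiable ℝ Φ)
    (hΦ' : ∀ s, deriv Φ s = φ s ^ 2) (hx : x ∈ U) (v : Fin n → ℝ) :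
    fderiv ℝ (fun y => Φ (p y)) x v = φ (p x) ^ 2 * fderiv ℝ p x v :=
  fderiv_comp_apply_of_hasDerivAt (hΦ' (p x) ▸ (hΦ (p x)).hasDerivAt)
    (hG.differentiableAt_pressure hx) v

theorem fderiv_rescaledVelocity_apply (hG : IsGavrilovFlow U u p) (hφ : Differentiable ℝ φ)
    (hx : x ∈ U) (v : Fin n → ℝ) (i : Fin n) :
    fderiv ℝ (fun y => φ (p y) • u y) x v i
      = φ (p x) * fderiv ℝ u x v i + deriv φ (p x) * fderiv ℝ p x v * u x i := by
  rw [fderiv_comp_smul_apply (hφ _) (hG.differentiableAt_pressure hx)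
    (hG.differentiableAt_velocity hx)]
  rfl

theorem momentum_rescaled (hG : IsGavrilovFlow U u p) (hφ : Differentiable ℝ φ)
    (hΦ : Differentiable ℝ Φ) (hΦ' : ∀ s, deriv Φ s = φ s ^ 2) (hx : x ∈ U) (i : Fin n) :
    (∑ j, (φ (p x) • u x) j * fderiv ℝ (fun y => φ (p y) • u y) x (Pi.single j 1) i)
      + fderiv ℝ (fun y => Φ (p y)) x (Pi.single i 1) = 0 := by
  have hconv : ∑ j, (φ (p x) • u x) j * fderiv ℝ (fun y => φ (p y) • u y) x (Pi.single j 1) i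
      = φ (p x) ^ 2 * ∑ j, u x j * fderiv ℝ u x (Pi.single j 1) i
        + φ (p x) * deriv φ (p x) * u x i * ∑ j, u x j * fderiv ℝ p x (Pi.single j 1) := by
    simp only [mul_sum, ← sum_add_distrib, fderiv_rescaledVelocity_apply hG hφ hx,
      Pi.smul_apply, smul_eq_mul]
    exact sum_congr rfl fun j _ => by ring
  rw [hconv, fderiv_rescaledPressure hG hΦ hΦ' hx, hG.2.2.2.2.2 x hx]
  linear_combination φ (p x) ^ 2 * hG.2.2.2.1 x hx i

theorem divergence_rescaled (hG : IsGavrilovFlow U u p) (hφ : Differentiable ℝ φ)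
    (hx : x ∈ U) :
    ∑ i, fderiv ℝ (fun y => φ (p y) • u y) x (Pi.single i 1) i = 0 := by
  have hdiv : ∑ i, fderiv ℝ (fun y => φ (p y) • u y) x (Pi.single i 1) i
      = φ (p x) * ∑ i, fderiv ℝ u x (Pi.single i 1) i
        + deriv φ (p x) * ∑ i, u x i * fderiv ℝ p x (Pi.single i 1) := by
    simp only [mul_sum, ← sum_add_distrib, fderiv_rescaledVelocity_apply hG hφ hx]
    exact sum_congr rfl fun i _ => by ring
  rw [hdiv, hG.2.2.2.2.1 x hx, hG.2.2.2.2.2 x hx]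
  ring

theorem orthogonal_rescaled (hG : IsGavrilovFlow U u p) (hΦ : Differentiable ℝ Φ)
    (hΦ' : ∀ s, deriv Φ s = φ s ^ 2) (hx : x ∈ U) :
    ∑ i, (φ (p x) • u x) i * fderiv ℝ (fun y => Φ (p y)) x (Pi.single i 1) = 0 := by
  have horth : ∑ i, (φ (p x) • u x) i * fderiv ℝ (fun y => Φ (p y)) x (Pi.single i 1)
      = φ (p x) ^ 3 * ∑ i, u x i * fderiv ℝ p x (Pi.single i 1) := by
    simp only [mul_sum, fderiv_rescaledPressure hG hΦ hΦ' hx, Pi.smul_apply, smul_eq_mul]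
    exact sum_congr rfl fun i _ => by ring
  rw [horth, hG.2.2.2.2.2 x hx, mul_zero]

end IsGavrilovFlow

/-- if `(u,p)` is a Gavrilov flow on `U`, `φ` is smooth and `Φ' = φ²`,
then `(φ(p)·u, Φ(p))` is again a Gavrilov flow on `U`, and
`grad (Φ ∘ p) = φ(p)² · grad p` on `U`. -/
theorem gavrilov_rescaling {n : ℕ} (U : Set (Fin n → ℝ))
    (u : (Fin n → ℝ) → Fin n → ℝ) (p : (Fin n → ℝ) → ℝ)
    (hG : IsGavrilovFlow U u p)
    (φ Φ : ℝ → ℝ) (hφ : ContDiff ℝ (⊤ : ℕ∞) φ) (hΦ : ContDiff ℝ (⊤ : ℕ∞) Φ)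
    (hΦ' : ∀ s, deriv Φ s = φ s ^ 2) :
    IsGavrilovFlow U (fun x => φ (p x) • u x) (fun x => Φ (p x)) ∧
    ∀ x ∈ U, ∀ i, fderiv ℝ (fun y => Φ (p y)) x (Pi.single i 1)
      = φ (p x) ^ 2 * fderiv ℝ p x (Pi.single i 1) := by
  have hφd : Differentiable ℝ φ := hφ.differentiable (by simp)
  have hΦd : Differentiable ℝ Φ := hΦ.differentiable (by simp)
  refine ⟨⟨hG.1, (hφ.comp_contDiffOn hG.2.2.1).smul hG.2.1, hΦ.comp_contDiffOn hG.2.2.1,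
    fun x hx => hG.momentum_rescaled hφd hΦd hΦ' hx,
    fun x hx => hG.divergence_rescaled hφd hx,
    fun x hx => hG.orthogonal_rescaled hΦd hΦ' hx⟩,
    fun x hx _ => hG.fderiv_rescaledPressure hΦd hΦ' hx _⟩
end

section
/- Let (u,p) be a Gavrilov flow on an open set U ⊆ ℝⁿ and let γ : I → U be a differentiable curve on an interval I ⊆ ℝ satisfying γ'(t) = u(γ(t)) for all t ∈ I (a particle trajectory). Then the speed function t ↦ |u(γ(t))|² is constant on I (the Bernoulli law splits into two separate conservation laws: both the pressure and the speed are constant along each particle trajectory). -/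
open Finset

theorem ContinuousLinearMap.pi_apply_eq_sum_mul_single {ι κ : Type*} [Fintype ι] [DecidableEq ι]
    (L : (ι → ℝ) →L[ℝ] (κ → ℝ)) (v : ι → ℝ) (i : κ) :
    L v i = ∑ j, v j * L (Pi.single j 1) i := by
  conv_lhs => rw [← univ_sum_single v]
  simp only [map_sum, Finset.sum_apply]
  refine sum_congr rfl fun j _ => ?_
  rw [← smul_eq_mul, ← Pi.smul_apply, ← map_smul, ← Pi.single_smul, smul_eq_mul, mul_one]

theorem HasDerivWithinAt.sum_sq {ι : Type*} [Fintype ι] {f : ℝ → ι → ℝ} {f' : ι → ℝ}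
    {s : Set ℝ} {t : ℝ} (hf : HasDerivWithinAt f f' s t) :
    HasDerivWithinAt (fun τ => ∑ i, f τ i ^ 2) (2 * ∑ i, f t i * f' i) s t := by
  refine (HasDerivWithinAt.fun_sum fun i (_ : i ∈ univ) =>
    (hasDerivWithinAt_pi.mp hf i).fun_pow 2).congr_deriv ?_
  simp only [mul_sum]
  push_cast
  ring_nf

theorem Set.OrdConnected.eq_of_hasDerivWithinAt_eq_zero {E : Type*} [NormedAddCommGroup E]
    [NormedSpace ℝ E] {f : ℝ → E} {I : Set ℝ} (hI : I.OrdConnected)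
    (hf : ∀ t ∈ I, HasDerivWithinAt f 0 I t) {s t : ℝ} (hs : s ∈ I) (ht : t ∈ I) :
    f s = f t := by
  have h := (convex_iff_ordConnected.mpr hI).norm_image_sub_le_of_norm_hasDerivWithin_le
    (f' := fun _ => 0) (C := 0) hf (fun _ _ => by simp) ht hs
  simpa [sub_eq_zero] using h

namespace IsGavrilovFlow

variable {n : ℕ} {U : Set (Fin n → ℝ)} {u : (Fin n → ℝ) → Fin n → ℝ} {p : (Fin n → ℝ) → ℝ}
  {x : Fin n → ℝ}

theorem fderiv_apply_self_eq_neg_fderiv (hG : IsGavrilovFlow U u p) (hx : x ∈ U) (i : Fin n) :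
    fderiv ℝ u x (u x) i = -fderiv ℝ p x (Pi.single i 1) := by
  obtain ⟨-, -, -, hmomentum, -, -⟩ := hG
  rw [ContinuousLinearMap.pi_apply_eq_sum_mul_single]
  linarith [hmomentum x hx i]

theorem sum_mul_fderiv_apply_self_eq_zero (hG : IsGavrilovFlow U u p) (hx : x ∈ U) :
    ∑ i, u x i * fderiv ℝ u x (u x) i = 0 := by
  have ⟨_, _, _, _, _, horth⟩ := hG
  simp only [hG.fderiv_apply_self_eq_neg_fderiv hx, mul_neg, sum_neg_distrib, horth x hx,
    neg_zero]

theorem hasDerivWithinAt_speed_sq (hG : IsGavrilovFlow U u p) {γ : ℝ → Fin n → ℝ} {I : Set ℝ}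
    {t : ℝ} (hmem : γ t ∈ U) (hγ : HasDerivWithinAt γ (u (γ t)) I t) :
    HasDerivWithinAt (fun τ => ∑ i, u (γ τ) i ^ 2) 0 I t := by
  have ⟨hU, hu_smooth, _⟩ := hG
  have hu : DifferentiableAt ℝ u (γ t) :=
    (hu_smooth.contDiffAt (hU.mem_nhds hmem)).differentiableAt (by simp)
  have huγ := hu.hasFDerivAt.comp_hasDerivWithinAt t hγ
  simpa [hG.sum_mul_fderiv_apply_self_eq_zero hmem] using huγ.sum_sq

end IsGavrilovFlow

/-- for a Gavrilov flow the squared speed `|u(γ(t))|²` is constant along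
every particle trajectory `γ' = u ∘ γ` defined on an interval (so the Bernoulli law splits:
both the pressure and the speed are conserved separately). -/
theorem speed_const_on_trajectory {n : ℕ} (U : Set (Fin n → ℝ))
    (u : (Fin n → ℝ) → Fin n → ℝ) (p : (Fin n → ℝ) → ℝ)
    (hG : IsGavrilovFlow U u p)
    (I : Set ℝ) (hI : I.OrdConnected) (γ : ℝ → Fin n → ℝ)
    (hmem : ∀ t ∈ I, γ t ∈ U)
    (hγ : ∀ t ∈ I, HasDerivWithinAt γ (u (γ t)) I t) :
    ∀ s ∈ I, ∀ t ∈ I, ∑ i, (u (γ s) i) ^ 2 = ∑ i, (u (γ t) i) ^ 2 := fun _ hs _ ht =>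
  hI.eq_of_hasDerivWithinAt_eq_zero
    (fun t ht => hG.hasDerivWithinAt_speed_sq (hmem t ht) (hγ t ht)) hs ht
end

section
/- Let n ≥ 1 and let α : [0,∞) → ℝ be a smooth function with compact support such that α(r) = 0 for all r ≤ ε, for some ε > 0. Define β : [0,∞) → ℝ by β(r) = −∫_r^∞ s·α(s)² ds. Let u be the vector field on ℝ^{2n} given by u_{2j−1}(x) = −x_{2j}, u_{2j}(x) = x_{2j−1} (j = 1,…,n), and define ũ(x) = α(|x|)·u(x) and p̃(x) = β(|x|). Then ũ : ℝ^{2n} → ℝ^{2n} and p̃ : ℝ^{2n} → ℝ are smooth, both have compact support, and (ũ, p̃) is a Gavrilov flow on all of ℝ^{2n}; in particular there exists a smooth compactly supported solution of the steady Euler equations on ℝ^{2n} that is not identically zero whenever α is not identically zero. -/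
/-!
Write `J` for the rotation `(x₂ⱼ, x₂ⱼ₊₁) ↦ (-x₂ⱼ₊₁, x₂ⱼ)`, `φ(t) = α(√t)` and `ψ(t) = β(√t)`, so
that `ũ = φ(|x|²) J x`, `p̃ = ψ(|x|²)` and `ψ' = φ² / 2`. Only `J² = -1` and `⟨J x, x⟩ = 0` matter:
the derivative of `ũ` in the direction `v` is `φ J v + 2 φ' ⟨x, v⟩ J x`, so the convective term is
`φ² J² x = -φ² x`, balanced by `∇p̃ = φ² x`, while the divergence and `ũ · ∇p̃` are multiples of
`⟨J x, x⟩`. Since `α` vanishes near `0`, `φ` and `ψ` are smooth although `√` is not.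
-/

open Matrix Filter Topology Set MeasureTheory
open scoped ContDiff

section Sqrt

variable {f g : ℝ → ℝ} {ε c : ℝ}

theorem eventuallyEq_comp_sqrt (hε : 0 < ε) (hf : ∀ r < ε, f r = c) {t : ℝ} (ht : t < ε ^ 2) :
    (fun s => f √s) =ᶠ[𝓝 t] fun _ => c := by
  filter_upwards [Iio_mem_nhds ht] with s hs
  exact hf _ ((Real.sqrt_lt' hε).2 hs)

theorem contDiff_comp_sqrt (hε : 0 < ε) (hf : ContDiff ℝ ∞ f) (hc : ∀ r < ε, f r = c) :
    ContDiff ℝ ∞ fun t => f √t := by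
  refine contDiff_iff_contDiffAt.2 fun t => ?_
  rcases lt_or_ge t (ε ^ 2) with ht | ht
  · exact contDiffAt_const.congr_of_eventuallyEq (eventuallyEq_comp_sqrt hε hc ht)
  · exact hf.contDiffAt.comp t (Real.contDiffAt_sqrt (lt_of_lt_of_le (by positivity) ht).ne')

theorem hasDerivAt_comp_sqrt (hε : 0 < ε) (hf : ∀ r, HasDerivAt f (r * g r) r)
    (hg : ∀ r < ε, g r = 0) (t : ℝ) : HasDerivAt (fun t => f √t) (g √t / 2) t := by
  rcases lt_or_ge t (ε ^ 2) with ht | ht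
  · have hconst : ∀ r < ε, f r = f 0 := fun r hr =>
      isOpen_Iio.is_const_of_deriv_eq_zero (convex_Iio ε).isPreconnected
        (fun r _ => (hf r).differentiableAt.differentiableWithinAt)
        (fun r hr => by simp [(hf r).deriv, hg r hr]) hr hε
    rw [hg _ ((Real.sqrt_lt' hε).2 ht), zero_div]
    exact (hasDerivAt_const t (f 0)).congr_of_eventuallyEq (eventuallyEq_comp_sqrt hε hconst ht)
  · have ht0 : 0 < t := lt_of_lt_of_le (by positivity) ht
    refine ((hf √t).comp t (Real.hasDerivAt_sqrt ht0.ne')).congr_deriv ?_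
    field_simp [(Real.sqrt_pos.2 ht0).ne']

end Sqrt

section IntegralIoi

variable {f : ℝ → ℝ}

theorem HasCompactSupport.eventuallyEq_zero_atTop {E : Type*} [Zero E] {g : ℝ → E}
    (hg : HasCompactSupport g) : g =ᶠ[atTop] 0 := by
  rw [hasCompactSupport_iff_eventuallyEq, coclosedCompact_eq_cocompact] at hg
  exact hg.filter_mono atTop_le_cocompact

theorem hasDerivAt_neg_integral_Ioi (hf : Continuous f) (hfc : HasCompactSupport f) (r : ℝ) :
    HasDerivAt (fun r => -∫ s in Ioi r, f s) (f r) r := by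
  have hfi : Integrable f := hf.integrable_of_hasCompactSupport hfc
  have : (fun r => -∫ s in Ioi r, f s) = fun r => (∫ s in 0..r, f s) - ∫ s in Ioi 0, f s := by
    funext r
    rw [← intervalIntegral.integral_Ioi_sub_Ioi' hfi.integrableOn hfi.integrableOn]
    ring
  rw [this]
  exact (hf.integral_hasStrictDerivAt 0 r).hasDerivAt.sub_const _

theorem neg_integral_Ioi_eventuallyEq_zero (hfc : HasCompactSupport f) :
    (fun r => -∫ s in Ioi r, f s) =ᶠ[atTop] 0 := by
  obtain ⟨R, hR⟩ := eventually_atTop.1 hfc.eventuallyEq_zero_atTop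
  filter_upwards [eventually_ge_atTop R] with r hr
  rw [Pi.zero_apply, neg_eq_zero]
  exact setIntegral_eq_zero_of_forall_eq_zero fun s hs => hR s (hr.trans (le_of_lt hs))

end IntegralIoi

section SumSq

variable {ι : Type*} [Fintype ι]

theorem norm_le_sqrt_sum_sq (x : ι → ℝ) : ‖x‖ ≤ √(∑ i, x i ^ 2) :=
  (pi_norm_le_iff_of_nonneg (Real.sqrt_nonneg _)).2 fun i => by
    rw [Real.norm_eq_abs]
    exact Real.abs_le_sqrt (Finset.single_le_sum (fun j _ => sq_nonneg (x j)) (Finset.mem_univ i))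

theorem tendsto_sqrt_sum_sq_cocompact :
    Tendsto (fun x : ι → ℝ => √(∑ i, x i ^ 2)) (cocompact _) atTop :=
  tendsto_atTop_mono norm_le_sqrt_sum_sq tendsto_norm_cocompact_atTop

theorem hasCompactSupport_comp_sqrt_sum_sq {h : ℝ → ℝ} (hh : h =ᶠ[atTop] 0) :
    HasCompactSupport fun x : ι → ℝ => h √(∑ i, x i ^ 2) := by
  rw [hasCompactSupport_iff_eventuallyEq, coclosedCompact_eq_cocompact]
  exact hh.comp_tendsto tendsto_sqrt_sum_sq_cocompact

theorem hasFDerivAt_sum_sq (x : ι → ℝ) :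
    HasFDerivAt (fun y : ι → ℝ => ∑ i, y i ^ 2)
      (∑ i, (2 * x i) • ContinuousLinearMap.proj (R := ℝ) (φ := fun _ : ι => ℝ) i) x := by
  refine HasFDerivAt.fun_sum fun i _ => ?_
  have := (hasDerivAt_pow 2 (x i)).comp_hasFDerivAt x
    (ContinuousLinearMap.proj (R := ℝ) (φ := fun _ : ι => ℝ) i).hasFDerivAt
  simp only [Nat.cast_ofNat, Nat.add_one_sub_one, pow_one] at this
  exact this

theorem sum_two_mul_smul_proj_apply (x v : ι → ℝ) :
    (∑ i, (2 * x i) • ContinuousLinearMap.proj (R := ℝ) (φ := fun _ : ι => ℝ) i) v =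
      2 * (x ⬝ᵥ v) := by
  simp only [_root_.sum_apply, _root_.smul_apply, ContinuousLinearMap.proj_apply, smul_eq_mul,
    dotProduct, Finset.mul_sum, mul_assoc]

variable [DecidableEq ι]

theorem sum_smul_apply_single {E : Type*} [AddCommGroup E] [Module ℝ E] [TopologicalSpace E]
    (L : (ι → ℝ) →L[ℝ] E) (v : ι → ℝ) : ∑ j, v j • L (Pi.single j 1) = L v := by
  conv_rhs => rw [← Finset.univ_sum_single v, map_sum]
  refine Finset.sum_congr rfl fun j _ => ?_
  rw [← map_smul, ← Pi.single_smul', smul_eq_mul, mul_one]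

theorem sum_mul_apply_single (L : (ι → ℝ) →L[ℝ] ℝ) (v : ι → ℝ) :
    ∑ j, v j * L (Pi.single j 1) = L v :=
  sum_smul_apply_single L v

theorem sum_mul_apply_single_apply {κ : Type*} (L : (ι → ℝ) →L[ℝ] (κ → ℝ)) (v : ι → ℝ) (k : κ) :
    ∑ j, v j * L (Pi.single j 1) k = L v k := by
  simpa using congrFun (sum_smul_apply_single L v) k

end SumSq

theorem isGavrilovFlow_univ_radial {m : ℕ} (J : (Fin m → ℝ) →L[ℝ] (Fin m → ℝ))
    (hJJ : ∀ x, J (J x) = -x) (hJ : ∀ x, J x ⬝ᵥ x = 0) {φ ψ : ℝ → ℝ}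
    (hφ : ContDiff ℝ ∞ φ) (hψ : ∀ t, HasDerivAt ψ (φ t ^ 2 / 2) t) :
    IsGavrilovFlow univ (fun x => φ (∑ i, x i ^ 2) • J x) (fun x => ψ (∑ i, x i ^ 2)) := by
  have hq : ContDiff ℝ ∞ fun x : Fin m → ℝ => ∑ i, x i ^ 2 :=
    ContDiff.sum fun i _ => (contDiff_apply ℝ ℝ i).pow 2
  have hψ_smooth : ContDiff ℝ ∞ ψ := contDiff_infty_iff_deriv.2
    ⟨fun t => (hψ t).differentiableAt, by
      rw [show deriv ψ = fun t => φ t ^ 2 / 2 from funext fun t => (hψ t).deriv]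
      exact (hφ.pow 2).div_const 2⟩
  have hdu : ∀ x v, fderiv ℝ (fun x => φ (∑ i, x i ^ 2) • J x) x v =
      φ (∑ i, x i ^ 2) • J v + (deriv φ (∑ i, x i ^ 2) * (2 * (x ⬝ᵥ v))) • J x := by
    intro x v
    have : HasFDerivAt (fun x => φ (∑ i, x i ^ 2) • J x) _ x :=
      ((hφ.differentiable (by simp) _).hasDerivAt.comp_hasFDerivAt x
        (hasFDerivAt_sum_sq x)).smul J.hasFDerivAt
    rw [this.fderiv]
    simp only [_root_.add_apply, _root_.smul_apply, ContinuousLinearMap.smulRight_apply,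
      Function.comp_apply, sum_two_mul_smul_proj_apply, smul_eq_mul]
  have hdp : ∀ x v, fderiv ℝ (fun x : Fin m → ℝ => ψ (∑ i, x i ^ 2)) x v =
      φ (∑ i, x i ^ 2) ^ 2 * (x ⬝ᵥ v) := by
    intro x v
    have : HasFDerivAt (fun x : Fin m → ℝ => ψ (∑ i, x i ^ 2)) _ x :=
      (hψ _).comp_hasFDerivAt x (hasFDerivAt_sum_sq x)
    rw [this.fderiv, _root_.smul_apply, sum_two_mul_smul_proj_apply, smul_eq_mul]
    ring
  refine ⟨isOpen_univ, ((hφ.comp hq).smul J.contDiff).contDiffOn, (hψ_smooth.comp hq).contDiffOn,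
    fun x _ i => ?_, fun x _ => ?_, fun x _ => ?_⟩
  · rw [sum_mul_apply_single_apply, hdu, hdp]
    simp [hJJ, dotProduct_comm x, hJ, sq, mul_assoc]
  · have hdiag : ∀ i, J (Pi.single i 1) i = 0 := fun i => by
      simpa [dotProduct_single] using hJ (Pi.single i 1)
    calc ∑ i, fderiv ℝ (fun x => φ (∑ i, x i ^ 2) • J x) x (Pi.single i 1) i
        = deriv φ (∑ i, x i ^ 2) * 2 * (J x ⬝ᵥ x) := by
          simp only [hdu, Pi.add_apply, Pi.smul_apply, hdiag, smul_eq_mul, dotProduct_single,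
            mul_zero, mul_one, zero_add]
          simp only [dotProduct, Finset.mul_sum]
          exact Finset.sum_congr rfl fun i _ => by ring
      _ = 0 := by rw [hJ, mul_zero]
  · rw [sum_mul_apply_single, hdp]
    simp [dotProduct_comm x, hJ]

def rotationField (n : ℕ) (x : Fin (2 * n) → ℝ) (i : Fin (2 * n)) : ℝ :=
  if _h : (i : ℕ) % 2 = 0 then -(x ⟨(i : ℕ) + 1, by omega⟩) else x ⟨(i : ℕ) - 1, by omega⟩

section Rotation

variable {n : ℕ}

theorem rotationField_rotationField (x : Fin (2 * n) → ℝ) :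
    rotationField n (rotationField n x) = -x := by
  ext ⟨i, hi⟩
  by_cases h : i % 2 = 0
  · simp [rotationField, h, show (i + 1) % 2 ≠ 0 by omega]
  · simp [rotationField, h, show (i - 1) % 2 = 0 by omega, show i - 1 + 1 = i by omega]

theorem rotationField_dotProduct_self (x : Fin (2 * n) → ℝ) : rotationField n x ⬝ᵥ x = 0 := by
  let partner (i : Fin (2 * n)) : Fin (2 * n) :=
    if h : (i : ℕ) % 2 = 0 then ⟨i + 1, by omega⟩ else ⟨i - 1, by omega⟩
  refine Finset.sum_ninvolution partner (fun ⟨i, hi⟩ => ?_) (fun ⟨i, hi⟩ _ => ?_)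
    (fun _ => Finset.mem_univ _) (fun ⟨i, hi⟩ => ?_)
  all_goals by_cases h : i % 2 = 0
  · simp only [partner, rotationField, h, ↓reduceDIte, show (i + 1) % 2 ≠ 0 by omega,
      add_tsub_cancel_right]
    ring
  · simp only [partner, rotationField, h, ↓reduceDIte, show (i - 1) % 2 = 0 by omega,
      show i - 1 + 1 = i by omega]
    ring
  · simp [partner, h]
  · simp only [partner, h, ↓reduceDIte, ne_eq, Fin.ext_iff]
    omega
  · simp [partner, h, show (i + 1) % 2 ≠ 0 by omega]
  · simp [partner, h, show (i - 1) % 2 = 0 by omega, show i - 1 + 1 = i by omega]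

noncomputable def rotationCLM (n : ℕ) : (Fin (2 * n) → ℝ) →L[ℝ] (Fin (2 * n) → ℝ) :=
  LinearMap.toContinuousLinearMap
    { toFun := rotationField n
      map_add' := fun x y => by
        ext i
        by_cases h : (i : ℕ) % 2 = 0 <;> simp [rotationField, h, add_comm]
      map_smul' := fun c x => by
        ext i
        by_cases h : (i : ℕ) % 2 = 0 <;> simp [rotationField, h] }

@[simp]
theorem coe_rotationCLM : ⇑(rotationCLM n) = rotationField n := rfl

theorem rotationField_ne_zero {x : Fin (2 * n) → ℝ} (hx : x ≠ 0) : rotationField n x ≠ 0 :=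
  fun h => hx <| neg_eq_zero.1 <| by
    rw [← rotationField_rotationField, h, ← coe_rotationCLM, map_zero]

theorem exists_smul_rotationField_ne_zero (hn : 1 ≤ n) {α : ℝ → ℝ} {r : ℝ} (hr0 : 0 < r)
    (hr : α r ≠ 0) : ∃ x, α √(∑ i, x i ^ 2) • rotationField n x ≠ 0 := by
  obtain ⟨i₀⟩ : Nonempty (Fin (2 * n)) := ⟨⟨0, by omega⟩⟩
  have hx : (Pi.single i₀ r : Fin (2 * n) → ℝ) ≠ 0 := by simpa using hr0.ne'
  refine ⟨_, smul_ne_zero ?_ (rotationField_ne_zero hx)⟩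
  rwa [Finset.sum_eq_single i₀ (fun j _ hj => by simp [hj]) (by simp), Pi.single_eq_same,
    Real.sqrt_sq hr0.le]

end Rotation

/-- Gavrilov localization of the rotation flow on `ℝ^{2n}`.  If `α` is a
smooth compactly supported function vanishing on `(-∞, ε]` (`ε > 0`),
`β(r) = −∫_r^∞ s α(s)² ds`, `u` is the rotation field `u_{2j} = −x_{2j+1}`,
`u_{2j+1} = x_{2j}` (indices from `0`), `ũ(x) = α(|x|)·u(x)` and `p̃(x) = β(|x|)`, then
`ũ, p̃` are smooth with compact support, `(ũ, p̃)` is a Gavrilov flow on all of `ℝ^{2n}`,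
and `ũ` is not identically zero whenever `α` is not identically zero. -/
theorem gavrilov_localization (n : ℕ) (hn : 1 ≤ n) (ε : ℝ) (hε : 0 < ε)
    (α : ℝ → ℝ) (hα : ContDiff ℝ (⊤ : ℕ∞) α) (hαc : HasCompactSupport α)
    (hα0 : ∀ r ≤ ε, α r = 0)
    (β : ℝ → ℝ) (hβ : ∀ r, β r = -∫ s in Set.Ioi r, s * α s ^ 2)
    (u ut : (Fin (2 * n) → ℝ) → Fin (2 * n) → ℝ) (pt : (Fin (2 * n) → ℝ) → ℝ)
    (hu : ∀ x (i : Fin (2 * n)), u x i =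
      if h : (i : ℕ) % 2 = 0 then -(x ⟨(i : ℕ) + 1, by have := i.isLt; omega⟩)
      else x ⟨(i : ℕ) - 1, by have := i.isLt; omega⟩)
    (hut : ∀ x, ut x = α (Real.sqrt (∑ i, x i ^ 2)) • u x)
    (hpt : ∀ x, pt x = β (Real.sqrt (∑ i, x i ^ 2))) :
    ContDiff ℝ (⊤ : ℕ∞) ut ∧ ContDiff ℝ (⊤ : ℕ∞) pt ∧
    HasCompactSupport ut ∧ HasCompactSupport pt ∧
    IsGavrilovFlow Set.univ ut pt ∧
    ((∃ r, α r ≠ 0) → ∃ x, ut x ≠ 0) := by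
  have hu' : u = rotationCLM n := funext fun x => funext (hu x)
  have hβ' : β = fun r => -∫ s in Ioi r, s * α s ^ 2 := funext hβ
  have hf : Continuous fun s => s * α s ^ 2 := continuous_id.mul (hα.continuous.pow 2)
  have hfc : HasCompactSupport fun s => s * α s ^ 2 :=
    (hαc.comp_left (g := fun a : ℝ => a ^ 2) (zero_pow two_ne_zero)).mul_left (f := id)
  have hψ : ∀ t, HasDerivAt (fun t => β √t) (α √t ^ 2 / 2) t :=
    hasDerivAt_comp_sqrt hε (hβ' ▸ hasDerivAt_neg_integral_Ioi hf hfc)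
      fun r hr => by simp [hα0 r hr.le]
  have hflow := isGavrilovFlow_univ_radial (rotationCLM n) rotationField_rotationField
    rotationField_dotProduct_self (contDiff_comp_sqrt hε hα fun r hr => hα0 r hr.le) hψ
  rw [show ut = _ from funext hut, show pt = _ from funext hpt, hu']
  refine ⟨contDiffOn_univ.1 hflow.2.1, contDiffOn_univ.1 hflow.2.2.1,
    (hasCompactSupport_comp_sqrt_sum_sq hαc.eventuallyEq_zero_atTop).smul_right,
    hasCompactSupport_comp_sqrt_sum_sq (hβ' ▸ neg_integral_Ioi_eventuallyEq_zero hfc), hflow, ?_⟩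
  rintro ⟨r, hr⟩
  exact exists_smul_rotationField_ne_zero hn (hε.trans (not_le.1 fun h => hr (hα0 r h))) hr
end

section
/- Let r : (p₁,p₂) → (0,∞) be a smooth function with r'(q) ≠ 0 for all q, and let b : (p₁,p₂) → ℝ be smooth. On the domain D = {(q,x) : q ∈ (p₁,p₂), |x| < r(q)} define f(q,x) = −√(r(q)² − x²), uˣ(q,x) = √(r(q)² − x²)/√(r(q)·|r'(q)|), and uʸ(q) = b(q). Then these functions, regarded as independent of y, satisfy the system: (i) ∂(f'_p uˣ)/∂x = 0; (ii) uˣ ∂uˣ/∂x + f'_x/|f'_p| = 0; (iii) uˣ ∂uʸ/∂x + f'_y/|f'_p| = 0 (trivially, since uʸ and f are independent of y here means f'_y = 0 and ∂uʸ/∂x = 0); (iv) f''_{xx}(uˣ)² = (1 + f'_x²)/|f'_p|, where f'_p = ∂f/∂q, f'_x = ∂f/∂x, f''_{xx} = ∂²f/∂x². -/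
/-!
Write `s = √(r² − x²)`. Then `f'_x = x / s`, `f''_xx = r² / s³` and `f'_p = −r r' / s`, so
`|f'_p| = r |r'| / s`. Hence `f'_p uˣ = −r r' / √(r |r'|)` does not depend on `x`, which is (i);
`uˣ ∂ₓuˣ = ∂ₓ(uˣ)² / 2 = −x / (r |r'|)` gives (ii); and (iv) reduces to `s² + x² = r²`.
-/

open Real Filter Topology

theorem sq_lt_sq_of_abs_lt {α : Type*} [Ring α] [LinearOrder α] [IsStrictOrderedRing α]
    {a b : α} (h : |a| < b) : a ^ 2 < b ^ 2 :=
  sq_lt_sq.2 (h.trans_le (le_abs_self b))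

section SqrtSqSubSq

variable {R t : ℝ}

theorem hasDerivAt_sqrt_sq_sub_sq (h : R ^ 2 - t ^ 2 ≠ 0) :
    HasDerivAt (fun u => √(R ^ 2 - u ^ 2)) (-t / √(R ^ 2 - t ^ 2)) t := by
  convert ((hasDerivAt_pow 2 t).const_sub (R ^ 2)).sqrt h using 1
  ring

theorem hasDerivAt_div_sqrt_sq_sub_sq (h : t ^ 2 < R ^ 2) :
    HasDerivAt (fun u => u / √(R ^ 2 - u ^ 2)) (R ^ 2 / √(R ^ 2 - t ^ 2) ^ 3) t := by
  have hpos : 0 < R ^ 2 - t ^ 2 := sub_pos.2 h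
  have hsqrt : √(R ^ 2 - t ^ 2) ≠ 0 := (sqrt_pos.2 hpos).ne'
  refine ((hasDerivAt_id' t).fun_div (hasDerivAt_sqrt_sq_sub_sq hpos.ne') hsqrt).congr_deriv ?_
  field_simp
  rw [sq_sqrt hpos.le]
  ring

theorem HasDerivAt.sqrt_sq_sub_sq {r : ℝ → ℝ} {r' q : ℝ} (hr : HasDerivAt r r' q)
    (h : r q ^ 2 - t ^ 2 ≠ 0) :
    HasDerivAt (fun s => √(r s ^ 2 - t ^ 2)) (r q * r' / √(r q ^ 2 - t ^ 2)) q := by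
  convert ((hr.fun_pow 2).sub_const (t ^ 2)).sqrt h using 1
  ring

end SqrtSqSubSq

noncomputable def halfCircleGraph (r : ℝ → ℝ) (q x : ℝ) : ℝ := -√(r q ^ 2 - x ^ 2)

noncomputable def halfCircleSpeed (r : ℝ → ℝ) (q x : ℝ) : ℝ :=
  √(r q ^ 2 - x ^ 2) / √(r q * |deriv r q|)

section HalfCircle

variable {r : ℝ → ℝ} {q x : ℝ}

theorem deriv_halfCircleGraph (h : r q ^ 2 - x ^ 2 ≠ 0) :
    deriv (halfCircleGraph r q) x = x / √(r q ^ 2 - x ^ 2) :=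
  ((hasDerivAt_sqrt_sq_sub_sq h).neg.congr_deriv (by ring)).deriv

theorem deriv_deriv_halfCircleGraph (h : x ^ 2 < r q ^ 2) :
    deriv (deriv (halfCircleGraph r q)) x = r q ^ 2 / √(r q ^ 2 - x ^ 2) ^ 3 := by
  have heq : deriv (halfCircleGraph r q) =ᶠ[𝓝 x] fun t => t / √(r q ^ 2 - t ^ 2) := by
    filter_upwards [((continuous_pow 2).tendsto x).eventually (gt_mem_nhds h)] with t ht
    exact deriv_halfCircleGraph (sub_pos.2 ht).ne'
  rw [heq.deriv_eq]
  exact (hasDerivAt_div_sqrt_sq_sub_sq h).deriv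

theorem deriv_halfCircleGraph_param (hr : DifferentiableAt ℝ r q) (h : r q ^ 2 - x ^ 2 ≠ 0) :
    deriv (fun s => halfCircleGraph r s x) q = -(r q * deriv r q) / √(r q ^ 2 - x ^ 2) :=
  ((hr.hasDerivAt.sqrt_sq_sub_sq h).neg.congr_deriv (by ring)).deriv

theorem abs_deriv_halfCircleGraph_param (hr : DifferentiableAt ℝ r q) (hr₀ : 0 ≤ r q)
    (h : r q ^ 2 - x ^ 2 ≠ 0) :
    |deriv (fun s => halfCircleGraph r s x) q| = r q * |deriv r q| / √(r q ^ 2 - x ^ 2) := by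
  rw [deriv_halfCircleGraph_param hr h, abs_div, abs_neg, abs_mul, abs_of_nonneg hr₀,
    abs_of_nonneg (sqrt_nonneg _)]

theorem deriv_halfCircleSpeed (h : r q ^ 2 - x ^ 2 ≠ 0) :
    deriv (halfCircleSpeed r q) x = -x / √(r q ^ 2 - x ^ 2) / √(r q * |deriv r q|) :=
  ((hasDerivAt_sqrt_sq_sub_sq h).div_const _).deriv

theorem halfCircle_continuity_eq (hr : DifferentiableAt ℝ r q) (hx : |x| < r q) :
    deriv (fun t => deriv (fun s => halfCircleGraph r s t) q * halfCircleSpeed r q t) x = 0 := by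
  have heq : (fun t => deriv (fun s => halfCircleGraph r s t) q * halfCircleSpeed r q t)
      =ᶠ[𝓝 x] fun _ => -(r q * deriv r q) / √(r q * |deriv r q|) := by
    filter_upwards [((continuous_pow 2).tendsto x).eventually
      (gt_mem_nhds (sq_lt_sq_of_abs_lt hx))] with t ht
    have hsqrt : √(r q ^ 2 - t ^ 2) ≠ 0 := (sqrt_pos.2 (sub_pos.2 ht)).ne'
    rw [deriv_halfCircleGraph_param hr (sub_pos.2 ht).ne', halfCircleSpeed]
    field_simp
  rw [heq.deriv_eq, deriv_const]

theorem halfCircle_euler_eq (hr : DifferentiableAt ℝ r q) (hx : |x| < r q) :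
    halfCircleSpeed r q x * deriv (halfCircleSpeed r q) x
      + deriv (halfCircleGraph r q) x / |deriv (fun s => halfCircleGraph r s x) q| = 0 := by
  have hr₀ : 0 ≤ r q := (abs_nonneg x).trans hx.le
  have hpos : 0 < r q ^ 2 - x ^ 2 := sub_pos.2 (sq_lt_sq_of_abs_lt hx)
  have hsqrt : √(r q ^ 2 - x ^ 2) ≠ 0 := (sqrt_pos.2 hpos).ne'
  have hK : √(r q * |deriv r q|) ^ 2 = r q * |deriv r q| :=
    sq_sqrt (mul_nonneg hr₀ (abs_nonneg _))
  rw [deriv_halfCircleSpeed hpos.ne', deriv_halfCircleGraph hpos.ne',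
    abs_deriv_halfCircleGraph_param hr hr₀ hpos.ne', div_div_div_cancel_right₀ hsqrt,
    halfCircleSpeed]
  generalize √(r q * |deriv r q|) = C at hK ⊢
  rw [← hK]
  field_simp
  ring

theorem halfCircle_curvature_eq (hr : DifferentiableAt ℝ r q) (hx : |x| < r q) :
    deriv (deriv (halfCircleGraph r q)) x * halfCircleSpeed r q x ^ 2
      = (1 + deriv (halfCircleGraph r q) x ^ 2) / |deriv (fun s => halfCircleGraph r s x) q| := by
  have hr₀ : 0 ≤ r q := (abs_nonneg x).trans hx.le
  have hpos : 0 < r q ^ 2 - x ^ 2 := sub_pos.2 (sq_lt_sq_of_abs_lt hx)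
  have hsqrt : √(r q ^ 2 - x ^ 2) ≠ 0 := (sqrt_pos.2 hpos).ne'
  have hsq : √(r q ^ 2 - x ^ 2) ^ 2 = r q ^ 2 - x ^ 2 := sq_sqrt hpos.le
  have hK : √(r q * |deriv r q|) ^ 2 = r q * |deriv r q| :=
    sq_sqrt (mul_nonneg hr₀ (abs_nonneg _))
  rw [deriv_deriv_halfCircleGraph (sq_lt_sq_of_abs_lt hx), deriv_halfCircleGraph hpos.ne',
    abs_deriv_halfCircleGraph_param hr hr₀ hpos.ne', halfCircleSpeed, div_pow, hK,
    ← mul_div_assoc, div_div_eq_mul_div]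
  congr 1
  field_simp
  linear_combination -hsq

end HalfCircle

theorem axisymmetric_explicit_solution_general (p₁ p₂ : ℝ)
    (r : ℝ → ℝ)
    (hr : ContDiffOn ℝ (⊤ : ℕ∞) r (Set.Ioo p₁ p₂))
    (f ux : ℝ → ℝ → ℝ) (uy : ℝ → ℝ)
    (hf : ∀ q x, f q x = -Real.sqrt (r q ^ 2 - x ^ 2))
    (hux : ∀ q x, ux q x = Real.sqrt (r q ^ 2 - x ^ 2) / Real.sqrt (r q * |deriv r q|)) :
    ∀ q ∈ Set.Ioo p₁ p₂, ∀ x : ℝ, |x| < r q →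
      -- (i)  ∂(f'_p uˣ)/∂x = 0
      deriv (fun t => deriv (fun s => f s t) q * ux q t) x = 0 ∧
      -- (ii) uˣ ∂uˣ/∂x + f'_x/|f'_p| = 0
      ux q x * deriv (fun t => ux q t) x
        + deriv (fun t => f q t) x / |deriv (fun s => f s x) q| = 0 ∧
      -- (iii) uˣ ∂uʸ/∂x + f'_y/|f'_p| = 0 (trivially: uʸ and f are independent of y)
      ux q x * deriv (fun _ : ℝ => uy q) x
        + deriv (fun _ : ℝ => f q x) x / |deriv (fun s => f s x) q| = 0 ∧
      -- (iv) f''_{xx}(uˣ)² = (1 + f'_x²)/|f'_p|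
      deriv (fun t => deriv (fun s => f q s) t) x * (ux q x) ^ 2
        = (1 + (deriv (fun t => f q t) x) ^ 2) / |deriv (fun s => f s x) q| := by
  obtain rfl : f = halfCircleGraph r := funext₂ hf
  obtain rfl : ux = halfCircleSpeed r := funext₂ hux
  intro q hq x hx
  have hrq : DifferentiableAt ℝ r q :=
    (hr.differentiableOn (by simp) q hq).differentiableAt (isOpen_Ioo.mem_nhds hq)
  exact ⟨halfCircle_continuity_eq hrq hx, halfCircle_euler_eq hrq hx, by simp,
    halfCircle_curvature_eq hrq hx⟩

/-- the explicit axisymmetric solution of the graph system (5.12)–(5.15).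
With `f(q,x) = −√(r(q)² − x²)`, `uˣ(q,x) = √(r(q)² − x²)/√(r(q)·|r'(q)|)`, `uʸ(q) = b(q)`
(all independent of `y`), the four equations of the system hold on
`D = {(q,x) : q ∈ (p₁,p₂), |x| < r(q)}`. -/
theorem axisymmetric_explicit_solution (p₁ p₂ : ℝ)
    (r b : ℝ → ℝ)
    (hr : ContDiffOn ℝ (⊤ : ℕ∞) r (Set.Ioo p₁ p₂))
    (hb : ContDiffOn ℝ (⊤ : ℕ∞) b (Set.Ioo p₁ p₂))
    (hrpos : ∀ q ∈ Set.Ioo p₁ p₂, 0 < r q)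
    (hr' : ∀ q ∈ Set.Ioo p₁ p₂, deriv r q ≠ 0)
    (f ux : ℝ → ℝ → ℝ) (uy : ℝ → ℝ)
    (hf : ∀ q x, f q x = -Real.sqrt (r q ^ 2 - x ^ 2))
    (hux : ∀ q x, ux q x = Real.sqrt (r q ^ 2 - x ^ 2) / Real.sqrt (r q * |deriv r q|))
    (huy : ∀ q, uy q = b q) :
    ∀ q ∈ Set.Ioo p₁ p₂, ∀ x : ℝ, |x| < r q →
      -- (i)  ∂(f'_p uˣ)/∂x = 0
      deriv (fun t => deriv (fun s => f s t) q * ux q t) x = 0 ∧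
      -- (ii) uˣ ∂uˣ/∂x + f'_x/|f'_p| = 0
      ux q x * deriv (fun t => ux q t) x
        + deriv (fun t => f q t) x / |deriv (fun s => f s x) q| = 0 ∧
      -- (iii) uˣ ∂uʸ/∂x + f'_y/|f'_p| = 0 (trivially: uʸ and f are independent of y)
      ux q x * deriv (fun _ : ℝ => uy q) x
        + deriv (fun _ : ℝ => f q x) x / |deriv (fun s => f s x) q| = 0 ∧
      -- (iv) f''_{xx}(uˣ)² = (1 + f'_x²)/|f'_p|
      deriv (fun t => deriv (fun s => f q s) t) x * (ux q x) ^ 2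
        = (1 + (deriv (fun t => f q t) x) ^ 2) / |deriv (fun s => f s x) q| :=
  axisymmetric_explicit_solution_general p₁ p₂ r hr f ux uy hf hux
end

section
/- Let R, u^t, u^θ : (p₁,p₂) × (t₁,t₂) → ℝ be smooth functions with R > 0 everywhere, satisfying at every point the two equations u^t·∂u^t/∂t − R·(∂R/∂t)·(u^θ)² = 0 and ∂u^θ/∂t + (2/R)(∂R/∂t)·u^θ = 0. Then there exists a smooth function d : (p₁,p₂) → ℝ such that (u^t)² + R²·(u^θ)² = d(p) for all (p,t); that is, for an axisymmetric Gavrilov flow all particles living on one isobaric surface move with the same speed. -/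
/-!
Geodesics have constant speed. In coordinates: with `E = (u^t)² + R²(u^θ)²`,
`∂E/∂t = 2 (u^t ∂u^t/∂t − R ∂R/∂t (u^θ)²) + 2 R² u^θ (∂u^θ/∂t + (2/R) ∂R/∂t u^θ)`,
so the two geodesic equations make `E` constant in `t` on each slice, and `d(p)` is `E` read off
at any fixed `t₀`.
-/

open Set

/-- Partial derivative in the second variable of a function of two real variables. -/
noncomputable def pdt (F : ℝ → ℝ → ℝ) (p t : ℝ) : ℝ := deriv (fun s => F p s) t

lemma DifferentiableAt.hasDerivAt_pdt {F : ℝ → ℝ → ℝ} {p t : ℝ}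
    (hF : DifferentiableAt ℝ (fun v : ℝ × ℝ => F v.1 v.2) (p, t)) :
    HasDerivAt (fun s => F p s) (pdt F p t) t :=
  (hF.comp t ((differentiableAt_const p).prodMk differentiableAt_id)).hasDerivAt

lemma ContDiffOn.hasDerivAt_pdt {F : ℝ → ℝ → ℝ} {S : Set (ℝ × ℝ)} {n : WithTop ℕ∞}
    (hF : ContDiffOn ℝ n (fun v : ℝ × ℝ => F v.1 v.2) S) (hn : n ≠ 0) (hS : IsOpen S)
    {p t : ℝ} (h : (p, t) ∈ S) : HasDerivAt (fun s => F p s) (pdt F p t) t :=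
  ((hF.contDiffAt (hS.mem_nhds h)).differentiableAt hn).hasDerivAt_pdt

lemma hasDerivAt_speed_sq_eq_zero_of_geodesic {u v r : ℝ → ℝ} {u' v' r' t : ℝ}
    (hu : HasDerivAt u u' t) (hv : HasDerivAt v v' t) (hr : HasDerivAt r r' t) (hr0 : r t ≠ 0)
    (h₁ : u t * u' - r t * r' * v t ^ 2 = 0) (h₂ : v' + 2 / r t * r' * v t = 0) :
    HasDerivAt (fun s => u s ^ 2 + r s ^ 2 * v s ^ 2) 0 t := by
  have h₂' : r t * v' + 2 * r' * v t = 0 := by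
    field_simp at h₂
    linarith
  refine ((hu.pow 2).add ((hr.pow 2).mul (hv.pow 2))).congr_deriv ?_
  simp only [Pi.pow_apply]
  linear_combination 2 * h₁ + 2 * r t * v t * h₂'

/-- if `R, u^t, u^θ` are smooth on `(p₁,p₂)×(t₁,t₂)` with `R > 0` and satisfy
the geodesic equations `u^t ∂u^t/∂t − R R'_t (u^θ)² = 0` and
`∂u^θ/∂t + (2R'_t/R) u^θ = 0`, then the squared speed `(u^t)² + R²(u^θ)²` depends only
on `p`: there is a smooth `d(p)` with `(u^t)² + R²(u^θ)² = d(p)`. -/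
theorem speed_depends_only_on_pressure (p₁ p₂ t₁ t₂ : ℝ) (R ut uθ : ℝ → ℝ → ℝ)
    (hR : ContDiffOn ℝ (⊤ : ℕ∞) (fun v : ℝ × ℝ => R v.1 v.2)
      (Set.Ioo p₁ p₂ ×ˢ Set.Ioo t₁ t₂))
    (hut : ContDiffOn ℝ (⊤ : ℕ∞) (fun v : ℝ × ℝ => ut v.1 v.2)
      (Set.Ioo p₁ p₂ ×ˢ Set.Ioo t₁ t₂))
    (huθ : ContDiffOn ℝ (⊤ : ℕ∞) (fun v : ℝ × ℝ => uθ v.1 v.2)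
      (Set.Ioo p₁ p₂ ×ˢ Set.Ioo t₁ t₂))
    (hRpos : ∀ p ∈ Set.Ioo p₁ p₂, ∀ t ∈ Set.Ioo t₁ t₂, 0 < R p t)
    (heq1 : ∀ p ∈ Set.Ioo p₁ p₂, ∀ t ∈ Set.Ioo t₁ t₂,
      ut p t * pdt ut p t - R p t * pdt R p t * (uθ p t) ^ 2 = 0)
    (heq2 : ∀ p ∈ Set.Ioo p₁ p₂, ∀ t ∈ Set.Ioo t₁ t₂,
      pdt uθ p t + (2 / R p t) * pdt R p t * uθ p t = 0) :
    ∃ d : ℝ → ℝ, ContDiffOn ℝ (⊤ : ℕ∞) d (Set.Ioo p₁ p₂) ∧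
      ∀ p ∈ Set.Ioo p₁ p₂, ∀ t ∈ Set.Ioo t₁ t₂,
        (ut p t) ^ 2 + (R p t) ^ 2 * (uθ p t) ^ 2 = d p := by
  rcases (Ioo t₁ t₂).eq_empty_or_nonempty with hempty | ⟨t₀, ht₀⟩
  · exact ⟨0, contDiffOn_const, fun p _ t ht => by simp [hempty] at ht⟩
  have hS : IsOpen (Ioo p₁ p₂ ×ˢ Ioo t₁ t₂) := isOpen_Ioo.prod isOpen_Ioo
  have hn : ((⊤ : ℕ∞) : WithTop ℕ∞) ≠ 0 := by simp
  have hspeed : ContDiffOn ℝ (⊤ : ℕ∞)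
      (fun v : ℝ × ℝ => ut v.1 v.2 ^ 2 + R v.1 v.2 ^ 2 * uθ v.1 v.2 ^ 2)
      (Ioo p₁ p₂ ×ˢ Ioo t₁ t₂) :=
    (hut.pow 2).add ((hR.pow 2).mul (huθ.pow 2))
  refine ⟨fun p => ut p t₀ ^ 2 + R p t₀ ^ 2 * uθ p t₀ ^ 2,
    hspeed.comp (contDiff_id.prodMk contDiff_const).contDiffOn fun p hp => ⟨hp, ht₀⟩,
    fun p hp t ht => ?_⟩
  have hderiv : ∀ s ∈ Ioo t₁ t₂,
      HasDerivAt (fun s => ut p s ^ 2 + R p s ^ 2 * uθ p s ^ 2) 0 s := fun s hs =>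
    hasDerivAt_speed_sq_eq_zero_of_geodesic (hut.hasDerivAt_pdt hn hS ⟨hp, hs⟩)
      (huθ.hasDerivAt_pdt hn hS ⟨hp, hs⟩) (hR.hasDerivAt_pdt hn hS ⟨hp, hs⟩)
      (hRpos p hp s hs).ne' (heq1 p hp s hs) (heq2 p hp s hs)
  exact isOpen_Ioo.is_const_of_deriv_eq_zero isPreconnected_Ioo
    (fun s hs => (hderiv s hs).differentiableAt.differentiableWithinAt)
    (fun s hs => (hderiv s hs).deriv) ht ht₀
end

section
/- Let R, Z, u^t, u^θ : (p₁,p₂) × (t₁,t₂) → ℝ be smooth with R > 0, set J = R'_p Z'_t − R'_t Z'_p and κ = R'_t Z''_{tt} − Z'_t R''_{tt}, and assume at every point: R'_t² + Z'_t² = 1; u^t ∂u^t/∂t − R R'_t (u^θ)² = 0; J ≠ 0; and κ (u^t)² + R Z'_t (u^θ)² = |J|⁻¹. If for some p₀ ∈ (p₁,p₂) one has u^t(p₀,t) = 0 for all t ∈ (t₁,t₂), then R'_t(p₀,t) = 0 and Z'_t(p₀,t)² = 1 for all t ∈ (t₁,t₂); that is, the isobaric surface M_{p₀} is a circular cylinder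 about the axis of symmetry. -/
/-- Partial derivative in the first variable (`p`). -/
noncomputable def pdp (F : ℝ → ℝ → ℝ) (p t : ℝ) : ℝ := deriv (fun s => F s t) p

/-- Second partial derivative in the second variable. -/
noncomputable def pdtt (F : ℝ → ℝ → ℝ) (p t : ℝ) : ℝ := deriv (fun s => pdt F p s) t

/-- The Jacobian `J = R'_p Z'_t − R'_t Z'_p`. -/
noncomputable def Jac (R Z : ℝ → ℝ → ℝ) (p t : ℝ) : ℝ :=
  pdp R p t * pdt Z p t - pdt R p t * pdp Z p t

/-- The curvature `κ = R'_t Z''_{tt} − Z'_t R''_{tt}` of the curve `t ↦ (R(p,t), Z(p,t))`. -/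
noncomputable def curv (R Z : ℝ → ℝ → ℝ) (p t : ℝ) : ℝ :=
  pdt R p t * pdtt Z p t - pdt Z p t * pdtt R p t

/-- if `u^t` vanishes identically on the isobaric surface `M_{p₀}` of an
axisymmetric Gavrilov flow, then `R'_t(p₀,·) = 0` and `Z'_t(p₀,·)² = 1`, i.e. `M_{p₀}` is a
circular cylinder about the axis of symmetry. -/
theorem degenerate_isobaric_is_cylinder (p₁ p₂ t₁ t₂ : ℝ) (R Z ut uθ : ℝ → ℝ → ℝ)
    (hR : ContDiffOn ℝ (⊤ : ℕ∞) (fun v : ℝ × ℝ => R v.1 v.2)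
      (Set.Ioo p₁ p₂ ×ˢ Set.Ioo t₁ t₂))
    (hZ : ContDiffOn ℝ (⊤ : ℕ∞) (fun v : ℝ × ℝ => Z v.1 v.2)
      (Set.Ioo p₁ p₂ ×ˢ Set.Ioo t₁ t₂))
    (hut : ContDiffOn ℝ (⊤ : ℕ∞) (fun v : ℝ × ℝ => ut v.1 v.2)
      (Set.Ioo p₁ p₂ ×ˢ Set.Ioo t₁ t₂))
    (huθ : ContDiffOn ℝ (⊤ : ℕ∞) (fun v : ℝ × ℝ => uθ v.1 v.2)
      (Set.Ioo p₁ p₂ ×ˢ Set.Ioo t₁ t₂))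
    (hRpos : ∀ p ∈ Set.Ioo p₁ p₂, ∀ t ∈ Set.Ioo t₁ t₂, 0 < R p t)
    (ha : ∀ p ∈ Set.Ioo p₁ p₂, ∀ t ∈ Set.Ioo t₁ t₂,
      (pdt R p t) ^ 2 + (pdt Z p t) ^ 2 = 1)
    (hb : ∀ p ∈ Set.Ioo p₁ p₂, ∀ t ∈ Set.Ioo t₁ t₂,
      ut p t * pdt ut p t - R p t * pdt R p t * (uθ p t) ^ 2 = 0)
    (hJ : ∀ p ∈ Set.Ioo p₁ p₂, ∀ t ∈ Set.Ioo t₁ t₂, Jac R Z p t ≠ 0)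
    (he : ∀ p ∈ Set.Ioo p₁ p₂, ∀ t ∈ Set.Ioo t₁ t₂,
      curv R Z p t * (ut p t) ^ 2 + R p t * pdt Z p t * (uθ p t) ^ 2 = |Jac R Z p t|⁻¹)
    (p₀ : ℝ) (hp₀ : p₀ ∈ Set.Ioo p₁ p₂)
    (hut0 : ∀ t ∈ Set.Ioo t₁ t₂, ut p₀ t = 0) :
    ∀ t ∈ Set.Ioo t₁ t₂, pdt R p₀ t = 0 ∧ (pdt Z p₀ t) ^ 2 = 1 := by
  intro t ht
  have hJ' := hJ p₀ hp₀ t ht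
  have he' := he p₀ hp₀ t ht
  have hb' := hb p₀ hp₀ t ht
  have ha' := ha p₀ hp₀ t ht
  rw [hut0 t ht] at he' hb'
  have hinv : |Jac R Z p₀ t|⁻¹ ≠ 0 := by positivity
  have huθ : (uθ p₀ t) ^ 2 ≠ 0 := by
    intro h; rw [h] at he'; simp at he'; exact hJ' (abs_eq_zero.mp he'.symm)
  have hRt : pdt R p₀ t = 0 := by
    have hRpos' := hRpos p₀ hp₀ t ht
    have : R p₀ t * pdt R p₀ t * (uθ p₀ t) ^ 2 = 0 := by linarith
    rcases mul_eq_zero.mp this with h | h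
    · rcases mul_eq_zero.mp h with h | h
      · linarith
      · exact h
    · exact absurd h huθ
  exact ⟨hRt, by nlinarith⟩
end

section
/- For all real numbers f, α, β, γ, A, B, C and ε with α ≠ 0 and ε² = 1, the following polynomial identity holds: −2ε·f²·(f²−β)·(εf²+γ)·[C·(f²−β) − (A/(2α))·(f²−β)·(εf²+γ) + (B/2)·(εf²+γ)] − 4α·(f²−β)·[(f²−β)·(εf²+γ) + 2ε·f²·(f²−β) − f²·(εf²+γ)] + 4α·f²·(f²−β)·(εf²+γ) − f⁴·(εf²+γ)³ + [4α·(f²−β) − f²·(εf²+γ)²]·[(f²−β)·(εf²+γ) + 2ε·f²·(f²−β) − f²·(εf²+γ)] = −f²·(f²−β)·(εf²+γ)·[(3 − A/α)·f⁴ + (2εC − ε(A/α)γ + (A/α)β + B + 4εγ)·f² + (−2εβC + ε(A/α)βγ + εγB − 4α + γ²)]. -/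
/-- the key polynomial identity behind the consistency conditions for
axisymmetric Gavrilov flows (equality of the left-hand sides of (7.30) and (7.31)):
for all reals `f, α, β, γ, A, B, C, ε` with `α ≠ 0` and `ε² = 1`, the degree-10 polynomial
expression factors as `−f²(f²−β)(εf²+γ)` times a quartic in `f`. -/
theorem consistency_polynomial_identity
    (f α β γ A B C ε : ℝ) (hα : α ≠ 0) (hε : ε ^ 2 = 1) :
    -2 * ε * f ^ 2 * (f ^ 2 - β) * (ε * f ^ 2 + γ) *
        (C * (f ^ 2 - β) - (A / (2 * α)) * (f ^ 2 - β) * (ε * f ^ 2 + γ)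
          + (B / 2) * (ε * f ^ 2 + γ))
      - 4 * α * (f ^ 2 - β) *
        ((f ^ 2 - β) * (ε * f ^ 2 + γ) + 2 * ε * f ^ 2 * (f ^ 2 - β)
          - f ^ 2 * (ε * f ^ 2 + γ))
      + 4 * α * f ^ 2 * (f ^ 2 - β) * (ε * f ^ 2 + γ)
      - f ^ 4 * (ε * f ^ 2 + γ) ^ 3
      + (4 * α * (f ^ 2 - β) - f ^ 2 * (ε * f ^ 2 + γ) ^ 2) *
        ((f ^ 2 - β) * (ε * f ^ 2 + γ) + 2 * ε * f ^ 2 * (f ^ 2 - β)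
          - f ^ 2 * (ε * f ^ 2 + γ))
    = -(f ^ 2 * (f ^ 2 - β) * (ε * f ^ 2 + γ) *
        ((3 - A / α) * f ^ 4
          + (2 * ε * C - ε * (A / α) * γ + (A / α) * β + B + 4 * ε * γ) * f ^ 2
          + (-2 * ε * β * C + ε * (A / α) * β * γ + ε * γ * B - 4 * α + γ ^ 2))) := by
  have h : ε = 1 ∨ ε = -1 := by
    rcases mul_self_eq_one_iff.mp (show ε * ε = 1 by nlinarith [hε]) with h | h <;> tauto
  rcases h with h | h <;> subst h <;> field_simp <;> ring
end

section
/- Let α, β, γ be C¹ functions on an interval (p₁,p₂) with α > 0, β ≥ 0, and let ε = ±1. Define F(p,f,π,ζ) = (f²−β(p))π² − α(p)(ζ²+1) and G(p,f,π,ζ) = f²(εf²+γ(p))²(ζ²+1) − 4α(p)(f²−β(p)), the open set U = {(p,z,f) ∈ ℝ³ : p₁ < p < p₂, f > √(β(p)), 0 < εf² + γ(p) < 2√(α(p))·√(f²−β(p))/f}, and the Jacobi bracket [F,G] = (F'_p + πF'_f)G'_π − (G'_p + πG'_f)F'_π + (F'_z + ζF'_f)G'_ζ − (G'_z + ζG'_f)F'_ζ.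 If U is nonempty, then the Jacobi bracket [F,G] is not identically zero on U × ℝ²; i.e., the system F = 0, G = 0 is never an involutory system. (Indeed, for fixed p, π ≠ 0, ζ, the quantity (1/4)[F,G] is a polynomial of degree 7 in f with leading coefficient −π²(2ζ²+3) ≠ 0.) -/
/-!
At `π = 0` every term of `[F,G]` except `−ζ G'_f F'_ζ` vanishes, so the bracket equals
`2αζ² G'_f` with `G'_f = c(ζ²+1) − 8αf`, where `c = 2f(εf²+γ)(3εf²+γ)` does not depend on `ζ`.
Vanishing at `ζ = 1` and `ζ = 2` would force `c = 0` and then `αf = 0`, impossible on `U`,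
where `α > 0` and `f > √β ≥ 0`. The degree-`7` claim is a direct expansion in which `ε² = 1`
fixes the coefficient of `f⁷`.
-/

/-- `F(p,z,f,π,ζ) = (f²−β(p))π² − α(p)(ζ²+1)` (independent of `z`). -/
noncomputable def Ffun (α β : ℝ → ℝ) (p z f pi ζ : ℝ) : ℝ :=
  (f ^ 2 - β p) * pi ^ 2 - α p * (ζ ^ 2 + 1)

/-- `G(p,z,f,π,ζ) = f²(εf²+γ(p))²(ζ²+1) − 4α(p)(f²−β(p))` (independent of `z`). -/
noncomputable def Gfun (α β γ : ℝ → ℝ) (ε : ℝ) (p z f pi ζ : ℝ) : ℝ :=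
  f ^ 2 * (ε * f ^ 2 + γ p) ^ 2 * (ζ ^ 2 + 1) - 4 * α p * (f ^ 2 - β p)

/-- The Jacobi (Mayer) bracket
`[F,G] = (F'_p+πF'_f)G'_π − (G'_p+πG'_f)F'_π + (F'_z+ζF'_f)G'_ζ − (G'_z+ζG'_f)F'_ζ`
of two functions of `(p,z,f,π,ζ)`. -/
noncomputable def jacobiBracket (F G : ℝ → ℝ → ℝ → ℝ → ℝ → ℝ) (p z f pi ζ : ℝ) : ℝ :=
  (deriv (fun s => F s z f pi ζ) p + pi * deriv (fun s => F p z s pi ζ) f) *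
      deriv (fun s => G p z f s ζ) pi
  - (deriv (fun s => G s z f pi ζ) p + pi * deriv (fun s => G p z s pi ζ) f) *
      deriv (fun s => F p z f s ζ) pi
  + (deriv (fun s => F p s f pi ζ) z + ζ * deriv (fun s => F p z s pi ζ) f) *
      deriv (fun s => G p z f pi s) ζ
  - (deriv (fun s => G p s f pi ζ) z + ζ * deriv (fun s => G p z s pi ζ) f) *
      deriv (fun s => F p z f pi s) ζ

/-- The open set `U = {(p,z,f) : p₁<p<p₂, f>√β(p), 0<εf²+γ(p)<2√α(p)·√(f²−β(p))/f}`. -/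
def Uset (α β γ : ℝ → ℝ) (ε p₁ p₂ : ℝ) : Set (ℝ × ℝ × ℝ) :=
  {v | p₁ < v.1 ∧ v.1 < p₂ ∧ Real.sqrt (β v.1) < v.2.2 ∧
       0 < ε * v.2.2 ^ 2 + γ v.1 ∧
       ε * v.2.2 ^ 2 + γ v.1
         < 2 * Real.sqrt (α v.1) * Real.sqrt (v.2.2 ^ 2 - β v.1) / v.2.2}

section Partials

variable {α β γ : ℝ → ℝ} {ε p z f pi ζ : ℝ}

lemma hasDerivAt_Ffun_p (hα : DifferentiableAt ℝ α p) (hβ : DifferentiableAt ℝ β p) :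
    HasDerivAt (fun s => Ffun α β s z f pi ζ)
      (-(deriv β p * pi ^ 2) - deriv α p * (ζ ^ 2 + 1)) p := by
  unfold Ffun
  refine (((hasDerivAt_const p (f ^ 2)).sub hβ.hasDerivAt).mul_const (pi ^ 2)).sub
    (hα.hasDerivAt.mul_const (ζ ^ 2 + 1)) |>.congr_deriv (by ring)

lemma hasDerivAt_Ffun_f : HasDerivAt (fun s => Ffun α β p z s pi ζ) (2 * f * pi ^ 2) f := by
  unfold Ffun
  refine (((hasDerivAt_pow 2 f).sub_const (β p)).mul_const (pi ^ 2)).sub_const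
    (α p * (ζ ^ 2 + 1)) |>.congr_deriv (by ring)

lemma hasDerivAt_Ffun_pi :
    HasDerivAt (fun s => Ffun α β p z f s ζ) (2 * (f ^ 2 - β p) * pi) pi := by
  unfold Ffun
  refine ((hasDerivAt_pow 2 pi).const_mul (f ^ 2 - β p)).sub_const
    (α p * (ζ ^ 2 + 1)) |>.congr_deriv (by ring)

lemma hasDerivAt_Ffun_zeta :
    HasDerivAt (fun s => Ffun α β p z f pi s) (-(2 * α p * ζ)) ζ := by
  unfold Ffun
  refine (((hasDerivAt_pow 2 ζ).add_const 1).const_mul (α p)).const_sub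
    ((f ^ 2 - β p) * pi ^ 2) |>.congr_deriv (by ring)

lemma hasDerivAt_Gfun_p (hα : DifferentiableAt ℝ α p) (hβ : DifferentiableAt ℝ β p)
    (hγ : DifferentiableAt ℝ γ p) :
    HasDerivAt (fun s => Gfun α β γ ε s z f pi ζ)
      (2 * f ^ 2 * (ε * f ^ 2 + γ p) * deriv γ p * (ζ ^ 2 + 1)
        - 4 * deriv α p * (f ^ 2 - β p) + 4 * α p * deriv β p) p := by
  unfold Gfun
  refine ((((hγ.hasDerivAt.const_add (ε * f ^ 2)).pow 2).const_mul (f ^ 2)).mul_const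
    (ζ ^ 2 + 1)).sub ((hα.hasDerivAt.const_mul 4).mul (hβ.hasDerivAt.const_sub (f ^ 2)))
    |>.congr_deriv (by ring)

lemma hasDerivAt_Gfun_f :
    HasDerivAt (fun s => Gfun α β γ ε p z s pi ζ)
      (2 * f * (ε * f ^ 2 + γ p) * (3 * ε * f ^ 2 + γ p) * (ζ ^ 2 + 1) - 8 * α p * f) f := by
  unfold Gfun
  refine (((hasDerivAt_pow 2 f).mul
    ((((hasDerivAt_pow 2 f).const_mul ε).add_const (γ p)).pow 2)).mul_const (ζ ^ 2 + 1)).sub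
    (((hasDerivAt_pow 2 f).sub_const (β p)).const_mul (4 * α p))
    |>.congr_deriv (by simp only [Pi.pow_apply]; ring)

lemma hasDerivAt_Gfun_zeta :
    HasDerivAt (fun s => Gfun α β γ ε p z f pi s) (2 * f ^ 2 * (ε * f ^ 2 + γ p) ^ 2 * ζ) ζ := by
  unfold Gfun
  refine (((hasDerivAt_pow 2 ζ).add_const 1).const_mul (f ^ 2 * (ε * f ^ 2 + γ p) ^ 2))
    |>.sub_const (4 * α p * (f ^ 2 - β p)) |>.congr_deriv (by ring)

end Partials

section Bracket

variable {α β γ : ℝ → ℝ} {ε p f : ℝ}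

lemma jacobiBracket_Ffun_Gfun (hα : DifferentiableAt ℝ α p) (hβ : DifferentiableAt ℝ β p)
    (hγ : DifferentiableAt ℝ γ p) (z pi ζ : ℝ) :
    jacobiBracket (Ffun α β) (Gfun α β γ ε) p z f pi ζ =
      2 * α p * ζ ^ 2
          * (2 * f * (ε * f ^ 2 + γ p) * (3 * ε * f ^ 2 + γ p) * (ζ ^ 2 + 1) - 8 * α p * f)
        - 2 * (f ^ 2 - β p) * pi
          * (2 * f ^ 2 * (ε * f ^ 2 + γ p) * deriv γ p * (ζ ^ 2 + 1)
              - 4 * deriv α p * (f ^ 2 - β p) + 4 * α p * deriv β p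
            + pi * (2 * f * (ε * f ^ 2 + γ p) * (3 * ε * f ^ 2 + γ p) * (ζ ^ 2 + 1)
              - 8 * α p * f))
        + 4 * f ^ 3 * (ε * f ^ 2 + γ p) ^ 2 * pi ^ 2 * ζ ^ 2 := by
  rw [jacobiBracket, (hasDerivAt_Ffun_p hα hβ).deriv, hasDerivAt_Ffun_f.deriv,
    hasDerivAt_Ffun_pi.deriv, hasDerivAt_Ffun_zeta.deriv, (hasDerivAt_Gfun_p hα hβ hγ).deriv,
    hasDerivAt_Gfun_f.deriv, hasDerivAt_Gfun_zeta.deriv]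
  simp only [Ffun, Gfun, deriv_const]
  ring

lemma exists_jacobiBracket_Ffun_Gfun_ne_zero (hα : DifferentiableAt ℝ α p)
    (hβ : DifferentiableAt ℝ β p) (hγ : DifferentiableAt ℝ γ p) (hα₀ : α p ≠ 0) (hf : f ≠ 0)
    (z : ℝ) : ∃ ζ, jacobiBracket (Ffun α β) (Gfun α β γ ε) p z f 0 ζ ≠ 0 := by
  by_contra! H
  have h₁ := H 1
  have h₂ := H 2
  rw [jacobiBracket_Ffun_Gfun hα hβ hγ] at h₁ h₂
  have : α p ^ 2 * f = 0 := by linear_combination (h₂ - 10 * h₁) / 96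
  exact mul_ne_zero (pow_ne_zero 2 hα₀) hf this

lemma exists_jacobiBracket_Ffun_Gfun_eq_leading_add (hε : ε = 1 ∨ ε = -1)
    (hα : DifferentiableAt ℝ α p) (hβ : DifferentiableAt ℝ β p) (hγ : DifferentiableAt ℝ γ p)
    (pi ζ : ℝ) :
    ∃ a : Fin 7 → ℝ, ∀ z f : ℝ,
      (1 / 4) * jacobiBracket (Ffun α β) (Gfun α β γ ε) p z f pi ζ
        = -(pi ^ 2 * (2 * ζ ^ 2 + 3)) * f ^ 7 + ∑ k : Fin 7, a k * f ^ (k : ℕ) := by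
  set A := α p; set B := β p; set C := γ p
  set dA := deriv α p; set dB := deriv β p; set dC := deriv γ p
  refine ⟨![2 * B ^ 2 * dA * pi + 2 * A * B * dB * pi,
      B * C ^ 2 * pi ^ 2 + B * C ^ 2 * pi ^ 2 * ζ ^ 2 + A * C ^ 2 * ζ ^ 2
        + A * C ^ 2 * ζ ^ 4 - 4 * A * B * pi ^ 2 - 4 * A ^ 2 * ζ ^ 2,
      -4 * B * dA * pi + B * C * dC * pi + B * C * dC * pi * ζ ^ 2 - 2 * A * dB * pi,
      -(C ^ 2 * pi ^ 2) + 4 * B * C * pi ^ 2 * ε + 4 * B * C * pi ^ 2 * ζ ^ 2 * ε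
        + 4 * A * pi ^ 2 + 4 * A * C * ζ ^ 2 * ε + 4 * A * C * ζ ^ 4 * ε,
      2 * dA * pi - C * dC * pi - C * dC * pi * ζ ^ 2 + B * dC * pi * ε
        + B * dC * pi * ζ ^ 2 * ε,
      -4 * C * pi ^ 2 * ε - 2 * C * pi ^ 2 * ζ ^ 2 * ε + 3 * B * pi ^ 2
        + 3 * B * pi ^ 2 * ζ ^ 2 + 3 * A * ζ ^ 2 + 3 * A * ζ ^ 4,
      -(dC * pi * ε) - dC * pi * ζ ^ 2 * ε], fun z f => ?_⟩
  rw [jacobiBracket_Ffun_Gfun hα hβ hγ]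
  simp only [Fin.sum_univ_seven, Matrix.cons_val, Fin.coe_ofNat_eq_mod, Nat.reduceMod,
    A, B, C, dA, dB, dC]
  rcases hε with rfl | rfl <;> ring

end Bracket

theorem never_involutory_general (p₁ p₂ : ℝ) (α β γ : ℝ → ℝ)
    (ε : ℝ) (hε : ε = 1 ∨ ε = -1)
    (hα : ContDiffOn ℝ 1 α (Set.Ioo p₁ p₂)) (hβ : ContDiffOn ℝ 1 β (Set.Ioo p₁ p₂))
    (hγ : ContDiffOn ℝ 1 γ (Set.Ioo p₁ p₂))
    (hαpos : ∀ p ∈ Set.Ioo p₁ p₂, 0 < α p)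
    (hne : (Uset α β γ ε p₁ p₂).Nonempty) :
    (¬ ∀ v ∈ Uset α β γ ε p₁ p₂, ∀ pi ζ : ℝ,
        jacobiBracket (Ffun α β) (Gfun α β γ ε) v.1 v.2.1 v.2.2 pi ζ = 0) ∧
    (∀ p ∈ Set.Ioo p₁ p₂, ∀ pi ζ : ℝ, pi ≠ 0 →
      ∃ a : Fin 7 → ℝ, ∀ z f : ℝ,
        (1 / 4) * jacobiBracket (Ffun α β) (Gfun α β γ ε) p z f pi ζ
          = -(pi ^ 2 * (2 * ζ ^ 2 + 3)) * f ^ 7 + ∑ k : Fin 7, a k * f ^ (k : ℕ)) := by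
  have hdiff {h : ℝ → ℝ} (hh : ContDiffOn ℝ 1 h (Set.Ioo p₁ p₂)) {p : ℝ}
      (hp : p ∈ Set.Ioo p₁ p₂) : DifferentiableAt ℝ h p :=
    (hh.differentiableOn one_ne_zero).differentiableAt (isOpen_Ioo.mem_nhds hp)
  refine ⟨fun H => ?_, fun p hp pi ζ _ =>
    exists_jacobiBracket_Ffun_Gfun_eq_leading_add hε (hdiff hα hp) (hdiff hβ hp)
      (hdiff hγ hp) pi ζ⟩
  obtain ⟨⟨p, z, f⟩, hv⟩ := hne
  obtain ⟨hp₁, hp₂, hf, -⟩ := id hv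
  have hp : p ∈ Set.Ioo p₁ p₂ := ⟨hp₁, hp₂⟩
  obtain ⟨ζ, hζ⟩ := exists_jacobiBracket_Ffun_Gfun_ne_zero (ε := ε) (hdiff hα hp)
    (hdiff hβ hp) (hdiff hγ hp) (hαpos p hp).ne' ((Real.sqrt_nonneg _).trans_lt hf).ne' z
  exact hζ (H (p, z, f) hv 0 ζ)

/-- Theorem 7.1: the system `F = 0`, `G = 0` is never involutory: if `U` is
nonempty then `[F,G]` does not vanish identically on `U × ℝ²`.  Indeed, for fixed `p`,
`π ≠ 0`, `ζ`, the quantity `(1/4)[F,G]` is a polynomial of degree `7` in `f` with leading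
coefficient `−π²(2ζ²+3) ≠ 0`. -/
theorem never_involutory (p₁ p₂ : ℝ) (α β γ : ℝ → ℝ)
    (ε : ℝ) (hε : ε = 1 ∨ ε = -1)
    (hα : ContDiffOn ℝ 1 α (Set.Ioo p₁ p₂)) (hβ : ContDiffOn ℝ 1 β (Set.Ioo p₁ p₂))
    (hγ : ContDiffOn ℝ 1 γ (Set.Ioo p₁ p₂))
    (hαpos : ∀ p ∈ Set.Ioo p₁ p₂, 0 < α p) (hβnn : ∀ p ∈ Set.Ioo p₁ p₂, 0 ≤ β p)
    (hne : (Uset α β γ ε p₁ p₂).Nonempty) :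
    (¬ ∀ v ∈ Uset α β γ ε p₁ p₂, ∀ pi ζ : ℝ,
        jacobiBracket (Ffun α β) (Gfun α β γ ε) v.1 v.2.1 v.2.2 pi ζ = 0) ∧
    (∀ p ∈ Set.Ioo p₁ p₂, ∀ pi ζ : ℝ, pi ≠ 0 →
      ∃ a : Fin 7 → ℝ, ∀ z f : ℝ,
        (1 / 4) * jacobiBracket (Ffun α β) (Gfun α β γ ε) p z f pi ζ
          = -(pi ^ 2 * (2 * ζ ^ 2 + 3)) * f ^ 7 + ∑ k : Fin 7, a k * f ^ (k : ℕ)) :=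
  never_involutory_general p₁ p₂ α β γ ε hε hα hβ hγ hαpos hne
end
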